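/- arXiv:2103.10481 — 2 statements merged into one kernel-verified Lean document; each statement's English description precedes it below -/
import Mathlib

section
/- Let V be an n×n real symmetric matrix with V·1 = 1, and let λ = ρ(V − 11ᵀ/n) < 1 be the spectral radius of V − 11ᵀ/n. Then for any n×M real matrix W̃, letting W = V^Γ W̃ and W̄ = (11ᵀ/n) W̃, the rows e_i of E = W − W̄ satisfy ‖e_i‖ ≤ λ^Γ · sqrt(n) · max_{j,j'} ‖w̃_j − w̃_{j'}‖ for every i, where w̃_j denotes the j-th row of W̃. -/
/-!
Write `J = 11ᵀ/n`. Since `VJ = JV = J = J²`, one has `V^Γ - J = (V - J)^Γ (1 - J)`, so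
`E = (V - J)^Γ X` with `X = W̃ - JW̃`. Each application of the symmetric matrix `V - J`
multiplies the Euclidean norm of every column by at most `λ`, so the Frobenius norm of `E` is at
most `λ^Γ` times that of `X`. Every row of `X` is `w̃_k` minus the mean row, a convex combination
of the `w̃_l`, so it has norm at most `max ‖w̃_j - w̃_j'‖`, and there are `n` rows.
-/

open Matrix

theorem sub_pow_mul_one_sub {R : Type*} [Ring R] {v p : R} (hp : IsIdempotentElem p)
    (hvp : v * p = p) (hpv : p * v = p) (k : ℕ) : (v - p) ^ k * (1 - p) = v ^ k - p := by
  have hpvk : ∀ m : ℕ, p * v ^ m = p := by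
    intro m
    induction m with
    | zero => rw [pow_zero, mul_one]
    | succ m ih => rw [pow_succ, ← mul_assoc, ih, hpv]
  induction k with
  | zero => rw [pow_zero, pow_zero, one_mul]
  | succ k ih =>
    rw [pow_succ', mul_assoc, ih, pow_succ', sub_mul, mul_sub, mul_sub, hvp, hpvk, hp.eq]
    abel

theorem dist_inv_card_smul_sum_le {E : Type*} [SeminormedAddCommGroup E] [NormedSpace ℝ E]
    {ι : Type*} [Fintype ι] [Nonempty ι] {w : ι → E} {x : E} {D : ℝ}
    (h : ∀ l, dist (w l) x ≤ D) : dist ((Fintype.card ι : ℝ)⁻¹ • ∑ l, w l) x ≤ D := by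
  have hweights : ∑ _l : ι, (Fintype.card ι : ℝ)⁻¹ = 1 := by
    rw [Finset.sum_const, Finset.card_univ, nsmul_eq_mul, mul_inv_cancel₀ (by positivity)]
  rw [Finset.smul_sum, ← Metric.mem_closedBall]
  exact (convex_closedBall x D).sum_mem (fun _ _ => by positivity) hweights
    fun l _ => Metric.mem_closedBall.mpr (h l)

theorem EuclideanSpace.dist_toLp_eq_sqrt_sum_sq {ι : Type*} [Fintype ι] (x y : ι → ℝ) :
    dist (WithLp.toLp 2 x : EuclideanSpace ℝ ι) (WithLp.toLp 2 y) = √(∑ i, (x i - y i) ^ 2) := by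
  simp only [EuclideanSpace.dist_eq, Real.dist_eq, sq_abs]

namespace Matrix.IsHermitian

variable {ι : Type*} [Fintype ι] [DecidableEq ι] {A : Matrix ι ι ℝ}

theorem eigenvectorBasis_repr_mulVec (hA : A.IsHermitian) (x : EuclideanSpace ℝ ι) (j : ι) :
    hA.eigenvectorBasis.repr (WithLp.toLp 2 (A *ᵥ x)) j =
      hA.eigenvalues j * hA.eigenvectorBasis.repr x j := by
  rw [OrthonormalBasis.repr_apply_apply, OrthonormalBasis.repr_apply_apply]
  simpa [toLpLin_apply, mulVec_eigenvectorBasis, real_inner_smul_left] using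
    (isSymmetric_toEuclideanLin_iff.mpr hA (hA.eigenvectorBasis j) x).symm

variable {c : ℝ}

theorem sum_sq_mulVec_le (hA : A.IsHermitian) (hc : ∀ i, |hA.eigenvalues i| ≤ c) (x : ι → ℝ) :
    ∑ i, (A *ᵥ x) i ^ 2 ≤ c ^ 2 * ∑ i, x i ^ 2 := by
  set b := hA.eigenvectorBasis
  have parseval : ∀ y : ι → ℝ, ∑ i, y i ^ 2 = ∑ j, b.repr (WithLp.toLp 2 y) j ^ 2 := fun y => by
    rw [← EuclideanSpace.real_norm_sq_eq, ← b.repr.norm_map, EuclideanSpace.real_norm_sq_eq]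
  rw [parseval, parseval x, Finset.mul_sum]
  refine Finset.sum_le_sum fun j _ => ?_
  rw [hA.eigenvectorBasis_repr_mulVec (WithLp.toLp 2 x) j, mul_pow]
  exact mul_le_mul_of_nonneg_right (sq_le_sq.mpr ((hc j).trans (le_abs_self c))) (sq_nonneg _)

theorem sum_sq_mul_le {κ : Type*} [Fintype κ] (hA : A.IsHermitian)
    (hc : ∀ i, |hA.eigenvalues i| ≤ c) (X : Matrix ι κ ℝ) :
    ∑ i, ∑ j, (A * X) i j ^ 2 ≤ c ^ 2 * ∑ i, ∑ j, X i j ^ 2 := by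
  rw [Finset.sum_comm, Finset.sum_comm (f := fun i j => X i j ^ 2), Finset.mul_sum]
  exact Finset.sum_le_sum fun j _ => hA.sum_sq_mulVec_le hc fun i => X i j

theorem sum_sq_pow_mul_le {κ : Type*} [Fintype κ] (hA : A.IsHermitian)
    (hc : ∀ i, |hA.eigenvalues i| ≤ c) (X : Matrix ι κ ℝ) (k : ℕ) :
    ∑ i, ∑ j, (A ^ k * X) i j ^ 2 ≤ (c ^ 2) ^ k * ∑ i, ∑ j, X i j ^ 2 := by
  induction k with
  | zero => simp
  | succ k ih =>
    calc ∑ i, ∑ j, (A ^ (k + 1) * X) i j ^ 2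
        = ∑ i, ∑ j, (A * (A ^ k * X)) i j ^ 2 := by rw [pow_succ', Matrix.mul_assoc]
      _ ≤ c ^ 2 * ((c ^ 2) ^ k * ∑ i, ∑ j, X i j ^ 2) :=
        (hA.sum_sq_mul_le hc _).trans (mul_le_mul_of_nonneg_left ih (sq_nonneg c))
      _ = (c ^ 2) ^ (k + 1) * ∑ i, ∑ j, X i j ^ 2 := by ring

end Matrix.IsHermitian

noncomputable def averagingMatrix (n : ℕ) : Matrix (Fin n) (Fin n) ℝ :=
  (n : ℝ)⁻¹ • of fun _ _ => 1

section averagingMatrix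

variable {n : ℕ}

theorem averagingMatrix_mul {κ : Type*} (W : Matrix (Fin n) κ ℝ) :
    averagingMatrix n * W = (n : ℝ)⁻¹ • of fun _ j => ∑ k, W k j := by
  ext i j
  simp [averagingMatrix, mul_apply, Finset.mul_sum]

theorem isIdempotentElem_averagingMatrix [NeZero n] : IsIdempotentElem (averagingMatrix n) := by
  rw [IsIdempotentElem, averagingMatrix_mul]
  ext i j
  simp [averagingMatrix]

theorem mul_averagingMatrix {V : Matrix (Fin n) (Fin n) ℝ}
    (hV : V *ᵥ (fun _ => 1) = fun _ => 1) : V * averagingMatrix n = averagingMatrix n := by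
  ext i j
  simpa [averagingMatrix, mul_apply, ← Finset.sum_mul, mulVec, dotProduct] using
    congrArg (· * (n : ℝ)⁻¹) (congrFun hV i)

theorem averagingMatrix_mul_of_isSymm {V : Matrix (Fin n) (Fin n) ℝ} (hsym : V.IsSymm)
    (hV : V *ᵥ (fun _ => 1) = fun _ => 1) : averagingMatrix n * V = averagingMatrix n := by
  have hJ : (averagingMatrix n)ᵀ = averagingMatrix n := by
    ext i j; rfl
  calc averagingMatrix n * V = (V * averagingMatrix n)ᵀ := by rw [transpose_mul, hsym.eq, hJ]
    _ = averagingMatrix n := by rw [mul_averagingMatrix hV, hJ]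

theorem sqrt_sum_sq_sub_averagingMatrix_mul_le [NeZero n] {κ : Type*} [Fintype κ]
    (W : Matrix (Fin n) κ ℝ) (k : Fin n) {D : ℝ} (h : ∀ l, √(∑ j, (W l j - W k j) ^ 2) ≤ D) :
    √(∑ j, (W - averagingMatrix n * W) k j ^ 2) ≤ D := by
  have hmean : (WithLp.toLp 2 fun j => (averagingMatrix n * W) k j) =
      (Fintype.card (Fin n) : ℝ)⁻¹ • ∑ l, (WithLp.toLp 2 fun j => W l j : EuclideanSpace ℝ κ) := by
    ext j
    simp [averagingMatrix_mul, Finset.mul_sum, WithLp.ofLp_sum]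
  have := dist_inv_card_smul_sum_le
    (w := fun l => (WithLp.toLp 2 fun j => W l j : EuclideanSpace ℝ κ))
    (x := WithLp.toLp 2 fun j => W k j)
    fun l => by rw [EuclideanSpace.dist_toLp_eq_sqrt_sum_sq]; exact h l
  rwa [← hmean, dist_comm, EuclideanSpace.dist_toLp_eq_sqrt_sum_sq] at this

end averagingMatrix

theorem stmt_4_general (n M Γ : ℕ) [NeZero n]
    (V : Matrix (Fin n) (Fin n) ℝ) (hsym : V.IsSymm)
    (hstoch : V.mulVec (fun _ => (1 : ℝ)) = fun _ => (1 : ℝ))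
    (hA : (V - (n : ℝ)⁻¹ • Matrix.of (fun _ _ => (1 : ℝ))).IsHermitian)
    (lam : ℝ)
    (hlam : lam = Finset.univ.sup' Finset.univ_nonempty (fun i => |hA.eigenvalues i|))
    (Wt : Matrix (Fin n) (Fin M) ℝ) :
    ∀ i, Real.sqrt (∑ j, (((V ^ Γ * Wt - (n : ℝ)⁻¹ • Matrix.of (fun (_ : Fin n) (j : Fin M) => ∑ k, Wt k j) : Matrix (Fin n) (Fin M) ℝ)) i j) ^ 2)
      ≤ lam ^ Γ * Real.sqrt n *
        Finset.univ.sup' Finset.univ_nonempty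
          (fun p : Fin n × Fin n => Real.sqrt (∑ m, (Wt p.1 m - Wt p.2 m) ^ 2)) := by
  intro i
  set J := averagingMatrix n
  set X := Wt - J * Wt
  set D := Finset.univ.sup' Finset.univ_nonempty
    (fun p : Fin n × Fin n => Real.sqrt (∑ m, (Wt p.1 m - Wt p.2 m) ^ 2))
  have hbd : ∀ k, |hA.eigenvalues k| ≤ lam := fun k => by
    rw [hlam]
    exact Finset.le_sup' (fun i => |hA.eigenvalues i|) (Finset.mem_univ k)
  have hE : V ^ Γ * Wt - (n : ℝ)⁻¹ • of (fun (_ : Fin n) (j : Fin M) => ∑ k, Wt k j)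
      = (V - J) ^ Γ * X := by
    have hpow := sub_pow_mul_one_sub isIdempotentElem_averagingMatrix
      (mul_averagingMatrix hstoch) (averagingMatrix_mul_of_isSymm hsym hstoch) Γ
    rw [← averagingMatrix_mul, ← Matrix.sub_mul, ← hpow, Matrix.mul_assoc, Matrix.sub_mul,
      Matrix.one_mul]
  have hrows : ∀ l k, √(∑ m, (Wt l m - Wt k m) ^ 2) ≤ D := fun l k =>
    Finset.le_sup' (fun p : Fin n × Fin n => √(∑ m, (Wt p.1 m - Wt p.2 m) ^ 2))
      (Finset.mem_univ (l, k))
  have hD : 0 ≤ D := (Real.sqrt_nonneg _).trans (hrows i i)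
  have hX : ∀ k, ∑ j, X k j ^ 2 ≤ D ^ 2 := fun k =>
    (Real.sqrt_le_left hD).mp (sqrt_sum_sq_sub_averagingMatrix_mul_le Wt k (hrows · k))
  have hlam0 : 0 ≤ lam := (abs_nonneg _).trans (hbd i)
  rw [hE, Real.sqrt_le_left (by positivity)]
  calc ∑ j, ((V - J) ^ Γ * X) i j ^ 2 ≤ ∑ i, ∑ j, ((V - J) ^ Γ * X) i j ^ 2 :=
        Finset.single_le_sum (f := fun i => ∑ j, ((V - J) ^ Γ * X) i j ^ 2)
          (fun _ _ => by positivity) (Finset.mem_univ i)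
    _ ≤ (lam ^ 2) ^ Γ * ∑ k, ∑ j, X k j ^ 2 := hA.sum_sq_pow_mul_le hbd X Γ
    _ ≤ (lam ^ 2) ^ Γ * ∑ _k : Fin n, D ^ 2 := by gcongr with k; exact hX k
    _ = (lam ^ Γ * √n * D) ^ 2 := by
      rw [Finset.sum_const, Finset.card_univ, Fintype.card_fin, nsmul_eq_mul, mul_pow, mul_pow,
        Real.sq_sqrt (Nat.cast_nonneg n), ← pow_mul, ← pow_mul, mul_comm 2 Γ]
      ring

/-- Consensus error bound: for a symmetric consensus matrix `V` with `V 1 = 1` and spectral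
radius `λ` of `V − 11ᵀ/n` smaller than `1`, after `Γ` rounds each row `e_i` of
`E = V^Γ W̃ − W̄` is bounded by `λ^Γ √n max_{j,j'} ‖w̃_j − w̃_{j'}‖`. -/
theorem stmt_4 (n M Γ : ℕ) [NeZero n] (hΓ : 1 ≤ Γ)
    (V : Matrix (Fin n) (Fin n) ℝ) (hsym : V.IsSymm)
    (hstoch : V.mulVec (fun _ => (1 : ℝ)) = fun _ => (1 : ℝ))
    (hA : (V - (n : ℝ)⁻¹ • Matrix.of (fun _ _ => (1 : ℝ))).IsHermitian)
    (lam : ℝ)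
    (hlam : lam = Finset.univ.sup' Finset.univ_nonempty (fun i => |hA.eigenvalues i|))
    (hlt : lam < 1)
    (Wt : Matrix (Fin n) (Fin M) ℝ) :
    ∀ i, Real.sqrt (∑ j, (((V ^ Γ * Wt - (n : ℝ)⁻¹ • Matrix.of (fun (_ : Fin n) (j : Fin M) => ∑ k, Wt k j) : Matrix (Fin n) (Fin M) ℝ)) i j) ^ 2)
      ≤ lam ^ Γ * Real.sqrt n *
        Finset.univ.sup' Finset.univ_nonempty
          (fun p : Fin n × Fin n => Real.sqrt (∑ m, (Wt p.1 m - Wt p.2 m) ^ 2)) :=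
  stmt_4_general n M Γ V hsym hstoch hA lam hlam Wt
end

section
/- Let γ, λ > 0 with γλ ≥ 1, let α > 1, and let a < t be integers with a ≥ 0. Then ∏_{j=a}^{t−1} (1 + γλ/(j + α)) ≤ (1 + (t − a)/(a − 1 + α))^{γλ}. -/
/-!
Bernoulli's inequality `1 + p x ≤ (1 + x)^p` for `p ≥ 1` bounds each factor by
`(1 + 1/(j + α))^{γλ}`, and the product of the `1 + 1/(j + α) = (j + 1 + α)/(j + α)` telescopes
to `(t + α)/(a + α) = 1 + (t - a)/(a + α)`. Shrinking the denominator `a + α` to `a - 1 + α`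
gives the claim.
-/

open Finset

lemma prod_Ico_one_add_inv_eq {c : ℝ} {a t : ℤ} (hac : 0 < a + c) (hat : a ≤ t) :
    ∏ j ∈ Ico a t, (1 + ((j : ℝ) + c)⁻¹) = 1 + ((t : ℝ) - a) / (a + c) := by
  induction t, hat using Int.leInduction with
  | base => simp
  | succ n han ih =>
    have hn : 0 < (n : ℝ) + c := by
      have : (a : ℝ) ≤ n := by exact_mod_cast han
      linarith
    rw [← insert_Ico_right_eq_Ico_add_one han, prod_insert right_notMem_Ico, ih]
    push_cast
    field_simp
    ring

lemma prod_Ico_one_add_div_le_rpow {p c : ℝ} (hp : 1 ≤ p) {a t : ℤ} (hac : 0 < a + c)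
    (hat : a ≤ t) :
    ∏ j ∈ Ico a t, (1 + p / ((j : ℝ) + c)) ≤ (1 + ((t : ℝ) - a) / (a + c)) ^ p := by
  have hpos : ∀ j ∈ Ico a t, 0 < (j : ℝ) + c := fun j hj => by
    have : (a : ℝ) ≤ j := by exact_mod_cast (mem_Ico.mp hj).1
    linarith
  calc ∏ j ∈ Ico a t, (1 + p / ((j : ℝ) + c))
      ≤ ∏ j ∈ Ico a t, (1 + ((j : ℝ) + c)⁻¹) ^ p := by
        refine prod_le_prod (fun j hj => by have := hpos j hj; positivity) fun j hj => ?_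
        rw [div_eq_mul_inv]
        exact one_add_mul_self_le_rpow_one_add (by linarith [inv_pos.mpr (hpos j hj)]) hp
    _ = (1 + ((t : ℝ) - a) / (a + c)) ^ p := by
        rw [Real.finsetProd_rpow _ _ fun j hj => by have := hpos j hj; positivity,
          prod_Ico_one_add_inv_eq hac hat]

theorem stmt_10_general (γ lam α : ℝ) (hγlam : 1 ≤ γ * lam)
    (hα : 1 < α) (a t : ℤ) (ha : 0 ≤ a) (hat : a < t) :
    ∏ j ∈ Finset.Ico a t, (1 + γ * lam / ((j : ℝ) + α))
      ≤ (1 + ((t : ℝ) - a) / ((a : ℝ) - 1 + α)) ^ (γ * lam) := by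
  have ha' : (0 : ℝ) ≤ a := by exact_mod_cast ha
  have hat' : (a : ℝ) ≤ t := by exact_mod_cast hat.le
  refine (prod_Ico_one_add_div_le_rpow hγlam (by linarith) hat.le).trans ?_
  gcongr <;> linarith

/-- For `γ, λ > 0` with `γλ ≥ 1`, `α > 1`, and integers `0 ≤ a < t`,
`∏_{j=a}^{t−1} (1 + γλ/(j + α)) ≤ (1 + (t − a)/(a − 1 + α))^{γλ}`. -/
theorem stmt_10 (γ lam α : ℝ) (hγ : 0 < γ) (hlam : 0 < lam) (hγlam : 1 ≤ γ * lam)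
    (hα : 1 < α) (a t : ℤ) (ha : 0 ≤ a) (hat : a < t) :
    ∏ j ∈ Finset.Ico a t, (1 + γ * lam / ((j : ℝ) + α))
      ≤ (1 + ((t : ℝ) - a) / ((a : ℝ) - 1 + α)) ^ (γ * lam) :=
  stmt_10_general γ lam α hγlam hα a t ha hat
end
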